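/- Let S = F_2[X]/(X²+1) with i the class of X, and let T = S[Y]/(Y²+Y+1) with ω the class of Y (so T ≅ F_4[i] = M_2-quotient alphabet base ring). For a, b, c, d ∈ S, if exactly one of the two elements a + bω and c + dω is a unit of T (i.e., one is invertible and the other is not), then the matrix [[a+d, b+c],[b+c+d, a+b+d]] is invertible in M_2(S). -/

import Mathlib

open Matrix Polynomial

/-- The ring `S = 𝔽₂[i] = 𝔽₂[X]/(X²+1)`. -/
noncomputable abbrev F2adjI : Type := AdjoinRoot (X ^ 2 + 1 : Polynomial (ZMod 2))

/-- The ring `T = S[Y]/(Y²+Y+1) ≅ 𝔽₄[i]`. -/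
noncomputable abbrev F4adjI' : Type := AdjoinRoot (X ^ 2 + X + 1 : Polynomial F2adjI)

/-!
`S` is a local ring with residue map `ε : S → 𝔽₂`, `i ↦ 1`. Since `i² = 1` in characteristic 2,
the Frobenius `x ↦ x²` of `S` factors as `S → 𝔽₂ ⊆ S` through `ε`; hence `x` is a unit iff
`ε x = 1`, and otherwise `x² = 0`. The conjugation `ω ↦ ω + 1 = ω²` of `T` gives
`(a + bω) · conj (a + bω) = N(a + bω)`, so `a + bω` is a unit of `T` iff its norm is a unit of `S`
(a non-unit norm squares to `0`). As the determinant of the matrix is `N(a + bω) + N(c + dω)`,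
its residue is `1 + 0 = 1`.
-/

namespace F2adjI

instance : Nontrivial F2adjI := AdjoinRoot.nontrivial _ (by
  rw [show (X ^ 2 + 1 : (ZMod 2)[X]).degree = 2 by compute_degree!]; decide)

instance : CharP F2adjI 2 := charP_of_injective_algebraMap' (ZMod 2) 2

lemma root_sq : AdjoinRoot.root (X ^ 2 + 1 : (ZMod 2)[X]) ^ 2 = 1 := by
  have h := AdjoinRoot.eval₂_root (X ^ 2 + 1 : (ZMod 2)[X])
  simp only [eval₂_add, eval₂_X_pow, eval₂_one] at h
  simpa [CharTwo.neg_eq] using eq_neg_of_add_eq_zero_left h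

noncomputable def residue : F2adjI →+* ZMod 2 :=
  AdjoinRoot.lift (RingHom.id _) 1 (by simp; decide)

lemma sq_eq_algebraMap_residue (x : F2adjI) :
    x ^ 2 = algebraMap (ZMod 2) F2adjI (residue x) := by
  suffices frobenius F2adjI 2 = (algebraMap (ZMod 2) F2adjI).comp residue by
    simpa [frobenius_def] using congr($this x)
  refine AdjoinRoot.ringHom_ext (Subsingleton.elim _ _) ?_
  simp [residue, frobenius_def, root_sq]

lemma isUnit_iff_residue_eq_one {x : F2adjI} : IsUnit x ↔ residue x = 1 := by
  refine ⟨fun hx => ?_, fun hx => .of_mul_eq_one x ?_⟩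
  · have : residue x ≠ 0 := (hx.map residue).ne_zero
    generalize residue x = e at this
    revert e; decide
  · rw [← sq, sq_eq_algebraMap_residue, hx, map_one]

lemma residue_eq_zero_of_not_isUnit {x : F2adjI} (hx : ¬IsUnit x) : residue x = 0 := by
  rw [isUnit_iff_residue_eq_one] at hx
  generalize residue x = e at hx
  revert e; decide

lemma sq_eq_zero_of_not_isUnit {x : F2adjI} (hx : ¬IsUnit x) : x ^ 2 = 0 := by
  rw [sq_eq_algebraMap_residue, residue_eq_zero_of_not_isUnit hx, map_zero]

lemma isUnit_add_of_isUnit_of_not_isUnit {x y : F2adjI} (hx : IsUnit x) (hy : ¬IsUnit y) :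
    IsUnit (x + y) := by
  rw [isUnit_iff_residue_eq_one] at hx ⊢
  rw [map_add, hx, residue_eq_zero_of_not_isUnit hy, add_zero]

end F2adjI

noncomputable def omegaNorm (a b : F2adjI) : F2adjI := a ^ 2 + a * b + b ^ 2

namespace F4adjI'

local notation "ω" => AdjoinRoot.root (X ^ 2 + X + 1 : Polynomial F2adjI)

instance : Nontrivial F4adjI' :=
  Ideal.Quotient.nontrivial_iff.mpr <| by
    rw [Ne, Ideal.span_singleton_eq_top, Monic.isUnit_iff (by monicity!)]
    intro h
    have : (X ^ 2 + X + 1 : F2adjI[X]).natDegree = 2 := by compute_degree!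
    simp [h] at this

instance : CharP F4adjI' 2 := charP_of_injective_algebraMap' (ZMod 2) 2

lemma omega_sq : ω ^ 2 = ω + 1 := by
  have h := AdjoinRoot.eval₂_root (X ^ 2 + X + 1 : F2adjI[X])
  simp only [eval₂_add, eval₂_X_pow, eval₂_X, eval₂_one] at h
  linear_combination h - (ω + 1) * CharTwo.two_eq_zero (R := F4adjI')

noncomputable def conj : F4adjI' →ₐ[F2adjI] F4adjI' :=
  AdjoinRoot.liftAlgHom _ (Algebra.ofId _ _) (ω + 1) <| by
    simp only [eval₂_add, eval₂_X_pow, eval₂_X, eval₂_one]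
    linear_combination omega_sq + 2 * (ω + 1) * CharTwo.two_eq_zero (R := F4adjI')

lemma mul_conj (a b : F2adjI) :
    (algebraMap F2adjI F4adjI' a + algebraMap F2adjI F4adjI' b * ω) *
        conj (algebraMap F2adjI F4adjI' a + algebraMap F2adjI F4adjI' b * ω) =
      algebraMap F2adjI F4adjI' (omegaNorm a b) := by
  simp only [conj, map_add, map_mul, AlgHom.commutes, AdjoinRoot.liftAlgHom_root, omegaNorm,
    map_pow]
  linear_combination (algebraMap F2adjI F4adjI' b) ^ 2 * omega_sq +
    (algebraMap F2adjI F4adjI' a * algebraMap F2adjI F4adjI' b +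
      algebraMap F2adjI F4adjI' b ^ 2) * ω * CharTwo.two_eq_zero (R := F4adjI')

lemma isUnit_iff_isUnit_omegaNorm (a b : F2adjI) :
    IsUnit (algebraMap F2adjI F4adjI' a + algebraMap F2adjI F4adjI' b * ω) ↔
      IsUnit (omegaNorm a b) := by
  set u := algebraMap F2adjI F4adjI' a + algebraMap F2adjI F4adjI' b * ω
  refine ⟨fun hu => ?_, fun hN => isUnit_of_mul_isUnit_left (y := conj u) ?_⟩
  · by_contra hN
    have hu' : IsUnit (algebraMap F2adjI F4adjI' (omegaNorm a b) ^ 2) := by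
      rw [← mul_conj]; exact (hu.mul (hu.map conj)).pow 2
    rw [← map_pow, F2adjI.sq_eq_zero_of_not_isUnit hN, map_zero] at hu'
    exact not_isUnit_zero hu'
  · rw [mul_conj]
    exact hN.map _

end F4adjI'

lemma det_eq_omegaNorm_add (a b c d : F2adjI) :
    (!![a + d, b + c; b + c + d, a + b + d] : Matrix (Fin 2) (Fin 2) F2adjI).det =
      omegaNorm a b + omegaNorm c d := by
  rw [Matrix.det_fin_two_of, omegaNorm, omegaNorm]
  linear_combination (a * d - b ^ 2 - b * c - c ^ 2 - c * d) * CharTwo.two_eq_zero (R := F2adjI)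

theorem stmt_12 (a b c d : F2adjI)
    (h : (IsUnit (algebraMap F2adjI F4adjI' a + algebraMap F2adjI F4adjI' b *
            AdjoinRoot.root (X ^ 2 + X + 1 : Polynomial F2adjI)) ∧
          ¬IsUnit (algebraMap F2adjI F4adjI' c + algebraMap F2adjI F4adjI' d *
            AdjoinRoot.root (X ^ 2 + X + 1 : Polynomial F2adjI))) ∨
         (¬IsUnit (algebraMap F2adjI F4adjI' a + algebraMap F2adjI F4adjI' b *
            AdjoinRoot.root (X ^ 2 + X + 1 : Polynomial F2adjI)) ∧
          IsUnit (algebraMap F2adjI F4adjI' c + algebraMap F2adjI F4adjI' d *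
            AdjoinRoot.root (X ^ 2 + X + 1 : Polynomial F2adjI)))) :
    IsUnit (!![a + d, b + c; b + c + d, a + b + d] : Matrix (Fin 2) (Fin 2) F2adjI) := by
  rw [Matrix.isUnit_iff_isUnit_det, det_eq_omegaNorm_add]
  simp only [F4adjI'.isUnit_iff_isUnit_omegaNorm] at h
  rcases h with ⟨hab, hcd⟩ | ⟨hab, hcd⟩
  · exact F2adjI.isUnit_add_of_isUnit_of_not_isUnit hab hcd
  · rw [add_comm (omegaNorm a b)]
    exact F2adjI.isUnit_add_of_isUnit_of_not_isUnit hcd hab
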